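/- Mixed composition (nabla after delta): let f be a real function on the grid {a, a+1, a+2, …} and α, β > 0. Let F be the grid function F(a+m) := (Δ_a^{−α} f)(a+m+α) for m ∈ ℕ. Then for every n ∈ ℕ with t = a + n, (∇_a^{−β} F)(t) = (∇_a^{−(α+β)} f)(t). -/

import Mathlib

/-!
On the grid `a + ℕ`, both fractional sums of order `ν > 0` are the Cauchy convolution of
`f (a + ·)` with the kernel `k ↦ Γ(ν + k) / (Γ(ν) k!)`, the coefficients of `(1 - X) ^ (-ν)`.
So the delta and the nabla sum coincide there, and composing two sums multiplies generating
series: `(1 - X) ^ (-α) * (1 - X) ^ (-β) = (1 - X) ^ (-(α + β))`, which is the Chu–Vandermonde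
identity.
-/

open Finset

/-- Falling factorial function `t^(ν) = Γ(t+1)/Γ(t+1-ν)` (with the convention
`1/Γ(z) = 0` for `z` a nonpositive integer, automatic since `Real.Gamma`
vanishes there and division by zero is zero). -/
noncomputable def fall (t ν : ℝ) : ℝ := Real.Gamma (t + 1) / Real.Gamma (t + 1 - ν)

/-- Rising factorial function `t^↑ν = Γ(t+ν)/Γ(t)`. -/
noncomputable def rise (t ν : ℝ) : ℝ := Real.Gamma (t + ν) / Real.Gamma t

/-- Delta fractional sum `(Δ_a^{-ν} f)(t+ν)` at `t = a + n`. -/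
noncomputable def deltaSum (a ν : ℝ) (f : ℝ → ℝ) (n : ℕ) : ℝ :=
  (1 / Real.Gamma ν) * ∑ j ∈ Finset.range (n + 1),
    fall ((a + n) + ν - (a + j) - 1) (ν - 1) * f (a + j)

/-- Nabla fractional sum `(∇_a^{-ν} f)(t)` at `t = a + n`. -/
noncomputable def nablaSum (a ν : ℝ) (f : ℝ → ℝ) (n : ℕ) : ℝ :=
  (1 / Real.Gamma ν) * ∑ j ∈ Finset.range (n + 1),
    rise ((a + n) - (a + j) + 1) (ν - 1) * f (a + j)

/-- Diamond-γ fractional sum of order (α, β) at `t = a + n`. -/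
noncomputable def diamond (γ a α β : ℝ) (f : ℝ → ℝ) (n : ℕ) : ℝ :=
  γ * deltaSum a α f n + (1 - γ) * nablaSum a β f n

/-- Backward difference `(∇ g)(t) = g(t) - g(t-1)`; `bdiff^[k]` is `∇^k`. -/
noncomputable def bdiff (g : ℝ → ℝ) : ℝ → ℝ := fun t => g t - g (t - 1)

/-- Generalized binomial coefficient `binom(u,v) = Γ(u+1)/(Γ(v+1)Γ(u-v+1))`. -/
noncomputable def binomR (u v : ℝ) : ℝ :=
  Real.Gamma (u + 1) / (Real.Gamma (v + 1) * Real.Gamma (u - v + 1))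

open PowerSeries
open scoped Nat

section multichooseSeries

variable {R : Type*} [CommRing R] [BinomialRing R]

/-- The power series of `(1 - X) ^ (-r)`. -/
noncomputable def multichooseSeries (r : R) : R⟦X⟧ :=
  PowerSeries.mk fun k => Ring.multichoose r k

theorem rescale_neg_one_binomialSeries_neg (r : R) :
    rescale (-1 : R) (binomialSeries R (-r)) = multichooseSeries r := by
  ext k
  rw [coeff_rescale, binomialSeries_coeff, multichooseSeries, coeff_mk, Ring.choose_neg',
    smul_eq_mul, mul_one, Units.smul_def, zsmul_eq_mul, Int.cast_negOnePow_natCast, ← mul_assoc,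
    ← mul_pow, neg_one_mul, neg_neg, one_pow, one_mul]

theorem multichooseSeries_add (r s : R) :
    multichooseSeries (r + s) = multichooseSeries r * multichooseSeries s := by
  rw [← rescale_neg_one_binomialSeries_neg, neg_add, binomialSeries_add, map_mul,
    rescale_neg_one_binomialSeries_neg, rescale_neg_one_binomialSeries_neg]

end multichooseSeries

theorem Real.Gamma_add_nat {x : ℝ} (hx : 0 < x) (k : ℕ) :
    Real.Gamma (x + k) = Real.Gamma x * (ascPochhammer ℝ k).eval x := by
  induction k with
  | zero => simp
  | succ k ih =>
    rw [Nat.cast_succ, ← add_assoc, Real.Gamma_add_one (by positivity), ih, ascPochhammer_succ_eval]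
    ring

theorem Real.multichoose_eq_Gamma_div {x : ℝ} (hx : 0 < x) (k : ℕ) :
    Ring.multichoose x k = Real.Gamma (x + k) / (Real.Gamma x * k !) := by
  have hfac := Ring.factorial_nsmul_multichoose_eq_ascPochhammer x k
  rw [Polynomial.ascPochhammer_smeval_eq_eval, nsmul_eq_mul] at hfac
  rw [Real.Gamma_add_nat hx, ← hfac]
  field_simp [(Real.Gamma_pos_of_pos hx).ne', Nat.cast_ne_zero.mpr k.factorial_ne_zero]

theorem rise_natCast_add_one (ν : ℝ) (k : ℕ) :
    rise (k + 1) (ν - 1) = Real.Gamma (ν + k) / k ! := by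
  rw [rise, show (k : ℝ) + 1 + (ν - 1) = ν + k by ring, Real.Gamma_nat_eq_factorial]

theorem fall_natCast_add_sub_one (ν : ℝ) (k : ℕ) :
    fall (k + ν - 1) (ν - 1) = Real.Gamma (ν + k) / k ! := by
  rw [fall, show (k : ℝ) + ν - 1 + 1 = ν + k by ring,
    show ν + k - (ν - 1) = (k : ℝ) + 1 by ring, Real.Gamma_nat_eq_factorial]

noncomputable def gridSeries (a : ℝ) (f : ℝ → ℝ) : ℝ⟦X⟧ :=
  PowerSeries.mk fun j => f (a + j)

theorem coeff_gridSeries_mul_multichooseSeries (a ν : ℝ) (f : ℝ → ℝ) (n : ℕ) :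
    coeff n (gridSeries a f * multichooseSeries ν) =
      ∑ j ∈ range (n + 1), Ring.multichoose ν (n - j) * f (a + j) := by
  rw [coeff_mul, Nat.sum_antidiagonal_eq_sum_range_succ
    (fun i j => coeff i (gridSeries a f) * coeff j (multichooseSeries ν))]
  simp only [gridSeries, multichooseSeries, coeff_mk, mul_comm]

theorem add_natCast_sub_add_natCast (a : ℝ) {j n : ℕ} (hjn : j ≤ n) :
    a + n - (a + j) = ((n - j : ℕ) : ℝ) := by
  rw [Nat.cast_sub hjn]
  ring

theorem nablaSum_eq_coeff (a : ℝ) {ν : ℝ} (hν : 0 < ν) (f : ℝ → ℝ) (n : ℕ) :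
    nablaSum a ν f n = coeff n (gridSeries a f * multichooseSeries ν) := by
  rw [coeff_gridSeries_mul_multichooseSeries, nablaSum, mul_sum]
  refine sum_congr rfl fun j hj => ?_
  rw [add_natCast_sub_add_natCast a (mem_range_succ_iff.mp hj), rise_natCast_add_one,
    Real.multichoose_eq_Gamma_div hν]
  ring

theorem deltaSum_eq_coeff (a : ℝ) {ν : ℝ} (hν : 0 < ν) (f : ℝ → ℝ) (n : ℕ) :
    deltaSum a ν f n = coeff n (gridSeries a f * multichooseSeries ν) := by
  rw [coeff_gridSeries_mul_multichooseSeries, deltaSum, mul_sum]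
  refine sum_congr rfl fun j hj => ?_
  rw [add_sub_right_comm, add_natCast_sub_add_natCast a (mem_range_succ_iff.mp hj),
    fall_natCast_add_sub_one, Real.multichoose_eq_Gamma_div hν]
  ring

/-- mixed composition (nabla after delta). -/
theorem nabla_delta (a α β : ℝ) (hα : 0 < α) (hβ : 0 < β) (f F : ℝ → ℝ)
    (hF : ∀ m : ℕ, F (a + m) = deltaSum a α f m) (n : ℕ) :
    nablaSum a β F n = nablaSum a (α + β) f n := by
  have hF_series : gridSeries a F = gridSeries a f * multichooseSeries α := by
    ext m
    rw [gridSeries, coeff_mk, hF, deltaSum_eq_coeff a hα]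
  rw [nablaSum_eq_coeff a hβ, nablaSum_eq_coeff a (add_pos hα hβ), hF_series,
    multichooseSeries_add, mul_assoc]
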